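/- Let p ∈ (1,∞). Then there is a constant c_p ≥ 0 such that the following holds: whenever X is a Banach space, T ∈ L(X), a, b ∈ ℤ with 1 ≤ a ≤ b, M(b) := sup_{0≤n≤b} ‖Tⁿ‖, μ : ℤ → ℂ is a sequence supported in { n ∈ ℤ : a ≤ n ≤ b }, and C ≥ 0 is an ℓ^p(ℤ;X)-convolution bound for μ, then ‖Σ_{n=a}^{b} μ(n) Tⁿ‖ ≤ c_p (1 + log(b/a)) M(b)² C. -/

import Mathlib

/-!
For `x ∈ X` and a window length `A`, let `F(i) = T^{-i} x` for `-A < i ≤ 0` and `F = 0` elsewhere.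
Then `T^n (μ ∗ F)(n) = ∑_k [k - A < n ≤ k] μ(k) T^k x`, so summing over `n ∈ [s, t] ⊆ [0, b]`
gives `∑_k μ(k) T^k x` weighted by a trapezoid of height `A`. Hölder's inequality on `[s, t]`,
the convolution bound and `‖F‖_p ≤ A^{1/p} M ‖x‖` bound this vector by `(t - s + 1) M² C ‖x‖`
when `A ≤ t - s + 1`.

On `[a, b]` the constant weight `1` is the ramp of width `a` starting at `0`. The identity
`ramp_{2A}(s) = (ramp_A(s) + ramp_A(s + A)) / 2` rewrites a ramp of width `A` as two trapezoids
of total cost `3/2` plus a ramp of width `2A` starting at `s + 2A`. After `J ≤ 1 + log₂(b/a)`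
doublings the remaining ramp reaches `b` and costs at most `4`.
-/

open MeasureTheory Finset
open scoped ENNReal

section CountingMeasure

variable {α E : Type*} [MeasurableSpace α] [MeasurableSingletonClass α] [NormedAddCommGroup E]

theorem eLpNorm_count_le_of_support_subset {g : α → E} {s : Finset α}
    (hg : Function.support g ⊆ s) {R : ℝ} (hR : ∀ i ∈ s, ‖g i‖ ≤ R) (p : ℝ≥0∞) :
    eLpNorm g p Measure.count ≤ (#s : ℝ≥0∞) ^ p.toReal⁻¹ * ENNReal.ofReal R := by
  rw [← eLpNorm_restrict_eq_of_support_subset hg]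
  refine (eLpNorm_le_of_ae_bound ((ae_restrict_iff' s.measurableSet).2 (.of_forall hR))).trans_eq ?_
  rw [Measure.restrict_apply_univ, Measure.count_apply_finset]

theorem sum_enorm_le_card_rpow_mul_eLpNorm [Countable α] (g : α → E) (s : Finset α)
    {p : ℝ≥0∞} (hp : 1 ≤ p) :
    ∑ i ∈ s, ‖g i‖ₑ ≤ (#s : ℝ≥0∞) ^ (1 - p.toReal⁻¹) * eLpNorm g p Measure.count := by
  have h := eLpNorm_le_eLpNorm_mul_rpow_measure_univ hp
    (AEStronglyMeasurable.of_discrete (f := g) (μ := Measure.count.restrict s))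
  rw [eLpNorm_one_eq_lintegral_enorm, lintegral_finset, Measure.restrict_apply_univ,
    Measure.count_apply_finset] at h
  simp only [Measure.count_singleton, mul_one, ENNReal.toReal_one, div_one, one_div] at h
  rw [mul_comm]
  exact h.trans (mul_le_mul_left (eLpNorm_mono_measure _ Measure.restrict_le_self) _)

end CountingMeasure

theorem ENNReal.rpow_mul_rpow_le_of_le {u v : ℝ≥0∞} (huv : v ≤ u) {θ : ℝ} (h0 : 0 ≤ θ)
    (h1 : θ ≤ 1) : u ^ (1 - θ) * v ^ θ ≤ u := by
  calc u ^ (1 - θ) * v ^ θ ≤ u ^ (1 - θ) * u ^ θ := by gcongr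
    _ = u := by rw [← ENNReal.rpow_add_of_nonneg _ _ (by linarith) h0]; norm_num

def IsConvolutionBound (X : Type*) [NormedAddCommGroup X] [NormedSpace ℂ X] (p : ℝ≥0∞)
    (μ : ℤ → ℂ) (C : ℝ) : Prop :=
  ∀ F : ℤ → X, MemLp F p Measure.count →
    eLpNorm (fun n => ∑' k, μ k • F (n - k)) p Measure.count
      ≤ ENNReal.ofReal C * eLpNorm F p Measure.count

theorem Int.card_Icc_inter_Ioc {A s t : ℤ} (hA : 0 ≤ A) (hst : s ≤ t + 1) (k : ℤ) :
    (#(Icc s t ∩ Ioc (k - A) k) : ℤ) = min A (max 0 (k - s + 1)) - min A (max 0 (k - t)) := by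
  rw [show Icc s t ∩ Ioc (k - A) k = Icc (max s (k - A + 1)) (min t k) by ext; simp; omega,
    Int.card_Icc]
  omega

noncomputable def ramp (A s k : ℤ) : ℂ := (min A (max 0 (k - s + 1)) : ℤ) / A

theorem ramp_sub_ramp {A s t : ℤ} (hA : 0 ≤ A) (hst : s ≤ t + 1) (k : ℤ) :
    ramp A s k - ramp A (t + 1) k = (A : ℂ)⁻¹ * #(Icc s t ∩ Ioc (k - A) k) := by
  rw [ramp, ramp, ← sub_div, div_eq_inv_mul, show k - (t + 1) + 1 = k - t by ring]
  exact_mod_cast congrArg (fun n : ℤ => (A : ℂ)⁻¹ * n) (Int.card_Icc_inter_Ioc hA hst k).symm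

theorem ramp_two_mul {A : ℤ} (hA : 0 < A) (s k : ℤ) :
    ramp (2 * A) s k = (ramp A s k + ramp A (s + A) k) / 2 := by
  have hA' : (A : ℂ) ≠ 0 := by exact_mod_cast hA.ne'
  have h : min (2 * A) (max 0 (k - s + 1))
      = min A (max 0 (k - s + 1)) + min A (max 0 (k - (s + A) + 1)) := by omega
  rw [ramp, ramp, ramp, h]
  push_cast
  field_simp

theorem ramp_eq_zero {A s k : ℤ} (hA : 0 ≤ A) (hk : k < s) : ramp A s k = 0 := by
  rw [ramp, max_eq_left (by omega), min_eq_right hA, Int.cast_zero, zero_div]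

theorem ramp_eq_one {A s k : ℤ} (hA : 0 < A) (hk : s + A ≤ k + 1) : ramp A s k = 1 := by
  rw [ramp, max_eq_right (by omega), min_eq_left (by omega)]
  exact div_self (by exact_mod_cast hA.ne')

section Transference

variable {X : Type*} [NormedAddCommGroup X] [NormedSpace ℂ X] (T : X →L[ℂ] X) (x : X)

noncomputable def windowOrbit (A : ℤ) : ℤ → X :=
  Set.indicator (Ioc (-A) 0 : Finset ℤ) fun i => (T ^ (-i).toNat) x

variable {T} in
theorem pow_apply_smul_windowOrbit (A : ℤ) {n k : ℤ} (hn : 0 ≤ n) (c : ℂ) :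
    (T ^ n.toNat) (c • windowOrbit T x A (n - k))
      = if n ∈ Ioc (k - A) k then c • (T ^ k.toNat) x else 0 := by
  have hmem : n - k ∈ Ioc (-A) 0 ↔ n ∈ Ioc (k - A) k := by simp only [mem_Ioc]; omega
  by_cases h : n ∈ Ioc (k - A) k
  · rw [if_pos h, windowOrbit, Set.indicator_of_mem (mem_coe.2 (hmem.2 h)), map_smul]
    rw [mem_Ioc] at h
    rw [show k.toNat = n.toNat + (-(n - k)).toNat by omega, pow_add]
    rfl
  · rw [if_neg h, windowOrbit, Set.indicator_of_notMem (mt mem_coe.1 (mt hmem.1 h)), smul_zero,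
      map_zero]

theorem sum_pow_apply_conv_windowOrbit (μ : ℤ → ℂ) (S : Finset ℤ) (hμ : ∀ k, μ k ≠ 0 → k ∈ S)
    (A : ℤ) {s t : ℤ} (hs : 0 ≤ s) :
    ∑ n ∈ Icc s t, (T ^ n.toNat) (∑' k, μ k • windowOrbit T x A (n - k))
      = ∑ k ∈ S, (#(Icc s t ∩ Ioc (k - A) k) : ℂ) • μ k • (T ^ k.toNat) x := by
  calc _ = ∑ n ∈ Icc s t, ∑ k ∈ S, if n ∈ Ioc (k - A) k then μ k • (T ^ k.toNat) x else 0 := by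
        refine sum_congr rfl fun n hn => ?_
        rw [tsum_eq_sum fun k hk => by rw [not_imp_comm.1 (hμ k) hk, zero_smul], map_sum]
        exact sum_congr rfl fun k _ => pow_apply_smul_windowOrbit x A (hs.trans (mem_Icc.1 hn).1) _
    _ = _ := by
        rw [sum_comm]
        simp only [sum_ite_mem, sum_const, Nat.cast_smul_eq_nsmul]

variable {T x} in
theorem norm_sum_pow_apply_conv_windowOrbit_le {p : ℝ≥0∞} (hp : 1 ≤ p) {μ : ℤ → ℂ} {b : ℤ}
    {M C : ℝ} (hM : ∀ n : ℕ, (n : ℤ) ≤ b → ‖T ^ n‖ ≤ M) (hC : 0 ≤ C)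
    (hconv : IsConvolutionBound X p μ C) {A s t : ℤ} (hA0 : 0 < A) (hs : 0 ≤ s)
    (hA : A ≤ t - s + 1) (htb : t ≤ b) :
    ‖∑ n ∈ Icc s t, (T ^ n.toNat) (∑' k, μ k • windowOrbit T x A (n - k))‖
      ≤ (t - s + 1) * (M ^ 2 * C * ‖x‖) := by
  set F := windowOrbit T x A
  set G := fun n => ∑' k, μ k • F (n - k)
  have hM0 : 0 ≤ M := (norm_nonneg _).trans (hM 0 (by omega))
  have hL : ((#(Icc s t) : ℕ) : ℝ) = t - s + 1 := by
    rw [Int.card_Icc, ← Int.cast_natCast, Int.toNat_of_nonneg (by omega)]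
    push_cast
    ring
  have hL0 : (0 : ℝ) ≤ t - s + 1 := hL ▸ Nat.cast_nonneg _
  have hF : eLpNorm F p Measure.count
      ≤ (#(Ioc (-A) 0) : ℝ≥0∞) ^ p.toReal⁻¹ * ENNReal.ofReal (M * ‖x‖) := by
    refine eLpNorm_count_le_of_support_subset Set.support_indicator_subset (fun i hi => ?_) p
    rw [Set.indicator_of_mem (mem_coe.2 hi)]
    exact (T ^ _).le_of_opNorm_le (hM _ (by rw [mem_Ioc] at hi; omega)) x
  have hθ0 : 0 ≤ p.toReal⁻¹ := inv_nonneg.2 ENNReal.toReal_nonneg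
  have hθ1 : p.toReal⁻¹ ≤ 1 := by
    rcases eq_or_ne p ⊤ with rfl | hp_top
    · simp
    · exact inv_le_one_of_one_le₀ (by simpa using ENNReal.toReal_mono hp_top hp)
  have hcard : (#(Ioc (-A) 0) : ℝ≥0∞) ≤ #(Icc s t) := by
    rw [Int.card_Ioc, Int.card_Icc]; exact_mod_cast (by omega)
  have hsumG : ENNReal.ofReal (∑ n ∈ Icc s t, ‖G n‖)
      ≤ ENNReal.ofReal ((t - s + 1) * (C * (M * ‖x‖))) := by
    calc ENNReal.ofReal (∑ n ∈ Icc s t, ‖G n‖) = ∑ n ∈ Icc s t, ‖G n‖ₑ := by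
          rw [ENNReal.ofReal_sum_of_nonneg fun n _ => norm_nonneg _]
          simp only [ofReal_norm]
      _ ≤ (#(Icc s t) : ℝ≥0∞) ^ (1 - p.toReal⁻¹) * eLpNorm G p Measure.count :=
          sum_enorm_le_card_rpow_mul_eLpNorm G _ hp
      _ ≤ (#(Icc s t) : ℝ≥0∞) ^ (1 - p.toReal⁻¹) * (ENNReal.ofReal C *
            ((#(Ioc (-A) 0) : ℝ≥0∞) ^ p.toReal⁻¹ * ENNReal.ofReal (M * ‖x‖))) := by
          gcongr
          exact (hconv F ⟨.of_discrete, hF.trans_lt (by finiteness)⟩).trans (by gcongr)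
      _ = ((#(Icc s t) : ℝ≥0∞) ^ (1 - p.toReal⁻¹) * (#(Ioc (-A) 0) : ℝ≥0∞) ^ p.toReal⁻¹) *
            (ENNReal.ofReal C * ENNReal.ofReal (M * ‖x‖)) := by ring
      _ ≤ #(Icc s t) * (ENNReal.ofReal C * ENNReal.ofReal (M * ‖x‖)) := by
          gcongr
          exact ENNReal.rpow_mul_rpow_le_of_le hcard hθ0 hθ1
      _ = ENNReal.ofReal ((t - s + 1) * (C * (M * ‖x‖))) := by
          rw [ENNReal.ofReal_mul hL0, ENNReal.ofReal_mul hC, ← hL, ENNReal.ofReal_natCast]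
  calc ‖∑ n ∈ Icc s t, (T ^ n.toNat) (G n)‖ ≤ ∑ n ∈ Icc s t, ‖(T ^ n.toNat) (G n)‖ :=
        norm_sum_le _ _
    _ ≤ ∑ n ∈ Icc s t, M * ‖G n‖ :=
        sum_le_sum fun n hn => (T ^ _).le_of_opNorm_le (hM _ (by rw [mem_Icc] at hn; omega)) _
    _ = M * ∑ n ∈ Icc s t, ‖G n‖ := (mul_sum _ _ _).symm
    _ ≤ M * ((t - s + 1) * (C * (M * ‖x‖))) := by
        gcongr
        exact (ENNReal.ofReal_le_ofReal_iff (by positivity)).1 hsumG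
    _ = (t - s + 1) * (M ^ 2 * C * ‖x‖) := by ring

variable (μ : ℤ → ℂ) (a b : ℤ)

noncomputable def orbitSum : (ℤ → ℂ) →ₗ[ℂ] X :=
  ∑ k ∈ Icc a b, (LinearMap.proj k).smulRight (μ k • (T ^ k.toNat) x)

theorem orbitSum_apply (w : ℤ → ℂ) :
    orbitSum T x μ a b w = ∑ k ∈ Icc a b, w k • μ k • (T ^ k.toNat) x := by
  simp [orbitSum]

theorem sum_smul_pow_apply_eq_orbitSum_ramp (ha : 0 < a) :
    (∑ n ∈ Icc a b, μ n • T ^ n.toNat) x = orbitSum T x μ a b (ramp a 0) := by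
  rw [orbitSum_apply, FunLike.coe_sum, Finset.sum_apply]
  refine sum_congr rfl fun k hk => ?_
  rw [ramp_eq_one ha (by rw [mem_Icc] at hk; omega), one_smul]
  rfl

variable {T x μ a b} {p : ℝ≥0∞} {M C : ℝ}

theorem norm_orbitSum_ramp_sub_ramp_le (hp : 1 ≤ p) (hM : ∀ n : ℕ, (n : ℤ) ≤ b → ‖T ^ n‖ ≤ M)
    (hC : 0 ≤ C) (hμ : ∀ n, μ n ≠ 0 → a ≤ n ∧ n ≤ b) (hconv : IsConvolutionBound X p μ C)
    {A s t : ℤ} (hA0 : 0 < A) (hs : 0 ≤ s) (hA : A ≤ t - s + 1) (htb : t ≤ b) :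
    ‖orbitSum T x μ a b (ramp A s - ramp A (t + 1))‖ ≤ (t - s + 1) / A * (M ^ 2 * C * ‖x‖) := by
  have hsum : orbitSum T x μ a b (ramp A s - ramp A (t + 1)) = (A : ℂ)⁻¹ •
      ∑ n ∈ Icc s t, (T ^ n.toNat) (∑' k, μ k • windowOrbit T x A (n - k)) := by
    rw [sum_pow_apply_conv_windowOrbit T x μ _ (fun k hk => mem_Icc.2 (hμ k hk)) A hs,
      orbitSum_apply, smul_sum]
    refine sum_congr rfl fun k _ => ?_
    rw [Pi.sub_apply, ramp_sub_ramp hA0.le (by omega), mul_smul]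
  have hA' : (0 : ℝ) < A := by exact_mod_cast hA0
  calc ‖orbitSum T x μ a b (ramp A s - ramp A (t + 1))‖
      = (A : ℝ)⁻¹ * ‖∑ n ∈ Icc s t, (T ^ n.toNat) (∑' k, μ k • windowOrbit T x A (n - k))‖ := by
        rw [hsum, norm_smul, norm_inv, Complex.norm_intCast, abs_of_pos hA']
    _ ≤ (A : ℝ)⁻¹ * ((t - s + 1) * (M ^ 2 * C * ‖x‖)) := by
        gcongr
        exact norm_sum_pow_apply_conv_windowOrbit_le hp hM hC hconv hA0 hs hA htb
    _ = (t - s + 1) / A * (M ^ 2 * C * ‖x‖) := by ring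

theorem norm_orbitSum_ramp_le (hp : 1 ≤ p) (hM : ∀ n : ℕ, (n : ℤ) ≤ b → ‖T ^ n‖ ≤ M)
    (hC : 0 ≤ C) (hμ : ∀ n, μ n ≠ 0 → a ≤ n ∧ n ≤ b) (hconv : IsConvolutionBound X p μ C)
    {A s : ℤ} (hA0 : 0 < A) (hs : 0 ≤ s) (hA : A ≤ b - s + 1) :
    ‖orbitSum T x μ a b (ramp A s)‖ ≤ (b - s + 1) / A * (M ^ 2 * C * ‖x‖) := by
  have h : orbitSum T x μ a b (ramp A s) = orbitSum T x μ a b (ramp A s - ramp A (b + 1)) := by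
    simp only [orbitSum_apply, Pi.sub_apply]
    refine sum_congr rfl fun k hk => ?_
    rw [ramp_eq_zero (s := b + 1) hA0.le (by rw [mem_Icc] at hk; omega), sub_zero]
  rw [h]
  exact norm_orbitSum_ramp_sub_ramp_le hp hM hC hμ hconv hA0 hs hA le_rfl

theorem norm_orbitSum_ramp_le_add (hp : 1 ≤ p) (hM : ∀ n : ℕ, (n : ℤ) ≤ b → ‖T ^ n‖ ≤ M)
    (hC : 0 ≤ C) (hμ : ∀ n, μ n ≠ 0 → a ≤ n ∧ n ≤ b) (hconv : IsConvolutionBound X p μ C)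
    {A s : ℤ} (hA0 : 0 < A) (hs : 0 ≤ s) (hsA : s + 2 * A ≤ b + 1) :
    ‖orbitSum T x μ a b (ramp A s)‖
      ≤ 3 / 2 * (M ^ 2 * C * ‖x‖) + ‖orbitSum T x μ a b (ramp (2 * A) (s + 2 * A))‖ := by
  have hsplit : ramp A s = (1 / 2 : ℂ) • (ramp A s - ramp A (s + A))
      + (ramp (2 * A) s - ramp (2 * A) (s + 2 * A)) + ramp (2 * A) (s + 2 * A) := by
    ext k
    simp only [Pi.add_apply, Pi.sub_apply, Pi.smul_apply, smul_eq_mul, ramp_two_mul hA0]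
    ring
  have h₁ := norm_orbitSum_ramp_sub_ramp_le (x := x) hp hM hC hμ hconv hA0 hs
    (t := s + A - 1) (by omega) (by omega)
  have h₂ := norm_orbitSum_ramp_sub_ramp_le (x := x) hp hM hC hμ hconv (by omega : 0 < 2 * A) hs
    (t := s + 2 * A - 1) (by omega) (by omega)
  rw [sub_add_cancel] at h₁ h₂
  push_cast at h₁ h₂
  rw [show ((s : ℝ) + A - 1 - s + 1) / A = 1 by field_simp; ring] at h₁
  rw [show ((s : ℝ) + 2 * A - 1 - s + 1) / (2 * A) = 1 by field_simp; ring] at h₂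
  rw [hsplit, map_add, map_add, map_smul]
  refine norm_add₃_le.trans ?_
  rw [norm_smul, norm_div, norm_one, Complex.norm_ofNat]
  linarith

theorem norm_orbitSum_ramp_le_iterate (hp : 1 ≤ p) (hM : ∀ n : ℕ, (n : ℤ) ≤ b → ‖T ^ n‖ ≤ M)
    (hC : 0 ≤ C) (hμ : ∀ n, μ n ≠ 0 → a ≤ n ∧ n ≤ b) (hconv : IsConvolutionBound X p μ C)
    (J : ℕ) {A s : ℤ} (hA0 : 0 < A) (hs : 0 ≤ s)
    (hJ : s + 2 * A * (2 ^ J - 1) + 2 ^ J * A ≤ b + 1) :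
    ‖orbitSum T x μ a b (ramp A s)‖ ≤ 3 / 2 * J * (M ^ 2 * C * ‖x‖)
      + ‖orbitSum T x μ a b (ramp (2 ^ J * A) (s + 2 * A * (2 ^ J - 1)))‖ := by
  induction J generalizing A s with
  | zero => simp
  | succ J ih =>
    have hpow : (1 : ℤ) ≤ 2 ^ J := one_le_pow₀ (by norm_num)
    rw [pow_succ] at hJ
    have h₁ := norm_orbitSum_ramp_le_add (x := x) hp hM hC hμ hconv hA0 hs (by nlinarith)
    have h₂ := ih (A := 2 * A) (s := s + 2 * A) (by omega) (by omega) (by linarith)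
    rw [show (2 : ℤ) ^ J * (2 * A) = 2 ^ (J + 1) * A by ring,
      show s + 2 * A + 2 * (2 * A) * (2 ^ J - 1) = s + 2 * A * (2 ^ (J + 1) - 1) by ring] at h₂
    push_cast
    linarith

theorem norm_orbitSum_ramp_le_dyadic (hp : 1 ≤ p) (hM : ∀ n : ℕ, (n : ℤ) ≤ b → ‖T ^ n‖ ≤ M)
    (hC : 0 ≤ C) (hμ : ∀ n, μ n ≠ 0 → a ≤ n ∧ n ≤ b) (hconv : IsConvolutionBound X p μ C)
    (J : ℕ) {A : ℤ} (hA0 : 0 < A) (hJ : 2 * A * (2 ^ J - 1) + 2 ^ J * A ≤ b + 1)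
    (hJb : b + 1 - 2 * A * (2 ^ J - 1) ≤ 4 * (2 ^ J * A)) :
    ‖orbitSum T x μ a b (ramp A 0)‖ ≤ (3 / 2 * J + 4) * (M ^ 2 * C * ‖x‖) := by
  have hpow : (1 : ℤ) ≤ 2 ^ J := one_le_pow₀ (by norm_num)
  have hJA : (0 : ℝ) < (2 ^ J * A : ℤ) := by exact_mod_cast (by positivity : (0 : ℤ) < 2 ^ J * A)
  have h₁ := norm_orbitSum_ramp_le_iterate (x := x) hp hM hC hμ hconv J hA0 le_rfl
    (by rwa [zero_add])
  have h₂ := norm_orbitSum_ramp_le (x := x) hp hM hC hμ hconv (A := 2 ^ J * A)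
    (s := 2 * A * (2 ^ J - 1)) (by positivity) (by nlinarith) (by linarith)
  have hlast : ((b : ℝ) - (2 * A * (2 ^ J - 1) : ℤ) + 1) / (2 ^ J * A : ℤ) ≤ 4 := by
    rw [div_le_iff₀ hJA]
    exact_mod_cast (by linarith : b - 2 * A * (2 ^ J - 1) + 1 ≤ 4 * (2 ^ J * A))
  rw [zero_add] at h₁
  calc _ ≤ 3 / 2 * J * (M ^ 2 * C * ‖x‖) + ((b : ℝ) - (2 * A * (2 ^ J - 1) : ℤ) + 1)
          / (2 ^ J * A : ℤ) * (M ^ 2 * C * ‖x‖) := h₁.trans (by gcongr)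
    _ ≤ 3 / 2 * J * (M ^ 2 * C * ‖x‖) + 4 * (M ^ 2 * C * ‖x‖) := by gcongr
    _ = (3 / 2 * J + 4) * (M ^ 2 * C * ‖x‖) := by ring

end Transference

theorem exists_dyadic_scale {a b : ℤ} (ha : 1 ≤ a) (hab : a ≤ b) :
    ∃ J : ℕ, 2 * a * (2 ^ J - 1) + 2 ^ J * a ≤ b + 1 ∧
      b + 1 - 2 * a * (2 ^ J - 1) ≤ 4 * (2 ^ J * a) ∧
      J * Real.log 2 ≤ Real.log 2 + Real.log (b / a) := by
  have ha' : (1 : ℝ) ≤ a := by exact_mod_cast ha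
  have hab' : (a : ℝ) ≤ b := by exact_mod_cast hab
  obtain ⟨J, hJ₁, hJ₂⟩ := exists_nat_pow_near (x := ((b : ℝ) + 1 + 2 * a) / (3 * a))
    (by rw [le_div_iff₀ (by positivity)]; linarith) one_lt_two
  rw [le_div_iff₀ (by positivity)] at hJ₁
  rw [div_lt_iff₀ (by positivity)] at hJ₂
  have hJ₁' : (2 : ℤ) ^ J * (3 * a) ≤ b + 1 + 2 * a := by exact_mod_cast hJ₁
  have hJ₂' : b + 1 + 2 * a < 2 ^ (J + 1) * (3 * a) := by exact_mod_cast hJ₂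
  refine ⟨J, by linarith, by rw [pow_succ] at hJ₂'; linarith, ?_⟩
  rw [← Real.log_pow, ← Real.log_mul two_ne_zero (div_pos (by linarith) (by linarith)).ne']
  refine Real.log_le_log (by positivity) ?_
  rw [mul_div_assoc', le_div_iff₀ (by positivity)]
  nlinarith

/-- **Transference principle for discrete operator semigroups
(Theorem 4.4).**  For every `p ∈ (1,∞)` there is `c_p ≥ 0` such that
whenever `T` is a bounded operator on a Banach space `X`, `1 ≤ a ≤ b` are
integers, `M(b)` bounds `‖Tⁿ‖` for `0 ≤ n ≤ b`, `μ : ℤ → ℂ` is supported in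
`[a,b]`, and `C` is an `ℓ^p(ℤ;X)`-convolution bound for `μ`, then
`‖Σ_{n=a}^{b} μ(n) Tⁿ‖ ≤ c_p (1 + log(b/a)) M(b)² C`. -/
theorem transference_semigroup_discrete (p : ℝ) (hp : 1 < p) :
    ∃ c : ℝ, 0 ≤ c ∧
      ∀ (X : Type*) [NormedAddCommGroup X] [NormedSpace ℂ X] [CompleteSpace X],
      ∀ T : X →L[ℂ] X,
      ∀ a b : ℤ, 1 ≤ a → a ≤ b →
      ∀ M : ℝ, (∀ n : ℕ, (n : ℤ) ≤ b → ‖T ^ n‖ ≤ M) →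
      ∀ μ : ℤ → ℂ, (∀ n : ℤ, μ n ≠ 0 → a ≤ n ∧ n ≤ b) →
      ∀ C : ℝ, 0 ≤ C →
        (∀ F : ℤ → X, MemLp F (ENNReal.ofReal p) Measure.count →
          eLpNorm (fun n : ℤ => ∑' k : ℤ, μ k • F (n - k)) (ENNReal.ofReal p)
              Measure.count
            ≤ ENNReal.ofReal C * eLpNorm F (ENNReal.ofReal p) Measure.count) →
        ‖∑ n ∈ Finset.Icc a b, μ n • T ^ n.toNat‖ ≤
          c * (1 + Real.log ((b : ℝ) / (a : ℝ))) * M ^ 2 * C := by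
  refine ⟨6, by norm_num, fun X _ _ _ T a b ha hab M hM μ hμ C hC hconv => ?_⟩
  have hp' : 1 ≤ ENNReal.ofReal p := ENNReal.one_le_ofReal.2 hp.le
  obtain ⟨J, hJ, hJb, hJlog⟩ := exists_dyadic_scale ha hab
  have hlog : 0 ≤ Real.log (b / a) :=
    Real.log_nonneg ((one_le_div (by positivity)).2 (by exact_mod_cast hab))
  have hJ6 : 3 / 2 * (J : ℝ) + 4 ≤ 6 * (1 + Real.log (b / a)) := by
    nlinarith [Real.log_two_gt_d9]
  refine ContinuousLinearMap.opNorm_le_bound _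
    (mul_nonneg (mul_nonneg (by linarith) (sq_nonneg M)) hC) fun x => ?_
  rw [sum_smul_pow_apply_eq_orbitSum_ramp T x μ a b (by omega)]
  calc _ ≤ (3 / 2 * J + 4) * (M ^ 2 * C * ‖x‖) :=
        norm_orbitSum_ramp_le_dyadic hp' hM hC hμ hconv J (by omega) hJ hJb
    _ ≤ 6 * (1 + Real.log (b / a)) * (M ^ 2 * C * ‖x‖) := by gcongr
    _ = _ := by ring
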